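/- arXiv:2511.14657 — 4 statements merged into one kernel-verified Lean document; each statement's English description precedes it below -/
import Mathlib

section
/- Let σ be a substitution and let Γ, Δ be CNF formulas. If Γ ⊢₁ Δ, then Γ↾σ ⊢₁ Δ↾σ. -/
/-!
Restriction commutes with unit propagation. Propagating a unit `ℓ` and then restricting by `σ`
is restricting by the composite substitution `σ ∘ [ℓ ↦ 1]`, and under `σ` the unit `{ℓ}` either
becomes empty (a refutation at once), is already satisfied (`σ` absorbs the propagation step), or
becomes the unit `{σ(ℓ)}`, whose propagation reproduces the step. By induction on the refutation,
unit refutations survive restriction. For `D ∈ Δ` with `σ(D) ≠ 1`, the restriction of `Γ ∧ ¬D`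
has all its clauses in `Γ↾σ ∧ ¬(D↾σ)`, and unit refutability is monotone in the set of clauses.
-/
namespace PaperMaxSAT

/-- Variables are natural numbers. -/
abbrev Var := ℕ

/-- A literal is a variable together with a polarity. -/
abbrev Lit := Var × Bool

/-- Negation of a literal. -/
def negLit (l : Lit) : Lit := (l.1, !l.2)

/-- A clause is a finite set of literals. -/
abbrev Clause := Finset Lit

/-- A CNF formula is a finite multiset of clauses. -/
abbrev CNF := Multiset Clause

/-- A tautological clause contains a literal together with its negation. -/
def isTaut (C : Clause) : Prop := ∃ l ∈ C, negLit l ∈ C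

/-- The value of a substitution at a variable: a Boolean constant or a literal. -/
abbrev SubVal := Bool ⊕ Lit

/-- Negation on substitution values. -/
def negSV : SubVal → SubVal
  | .inl b => .inl !b
  | .inr l => .inr (negLit l)

/-- A substitution maps each variable to `0`, `1` or a literal. -/
abbrev Sub := Var → SubVal

/-- Applying a substitution to a literal, respecting `σ(¬x) = ¬σ(x)`. -/
def appLit (σ : Sub) (l : Lit) : SubVal :=
  if l.2 then σ l.1 else negSV (σ l.1)

/-- The identity substitution. -/
def idSub : Sub := fun v => .inr (v, true)

/-- `σ(C) = 1` : some literal of `C` is mapped to true by `σ`. -/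
def clauseTrue (σ : Sub) (C : Clause) : Prop := ∃ l ∈ C, appLit σ l = Sum.inl true

instance (σ : Sub) (C : Clause) : Decidable (clauseTrue σ C) := by
  unfold clauseTrue; infer_instance

/-- `C↾σ` : the clause whose literals are the images under `σ` of the literals
of `C` mapped to literals (literals mapped to `0` are dropped). -/
def restrictClause (σ : Sub) (C : Clause) : Clause :=
  C.biUnion (fun l => match appLit σ l with
    | .inr m => {m}
    | _ => (∅ : Clause))

/-- `Γ↾σ` : restrict every clause of `Γ`; clauses mapped to `1` are removed. -/
def restrictCNF (σ : Sub) (Γ : CNF) : CNF :=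
  (Γ.filter (fun C => ¬ clauseTrue σ C)).map (restrictClause σ)

/-- `σ ⊨ C` : `σ(C) = 1` or `σ(C)` is tautological. -/
def subSat (σ : Sub) (C : Clause) : Prop :=
  clauseTrue σ C ∨ isTaut (restrictClause σ C)

/-- The assignment `¬C`, setting all literals of `C` to false. -/
def negSub (C : Clause) : Sub := fun v =>
  if (v, true) ∈ C then .inl false
  else if (v, false) ∈ C then .inl true
  else .inr (v, true)

/-- The substitution setting the literal `l` to true and touching nothing else. -/
def litSub (l : Lit) : Sub := fun v => if v = l.1 then .inl l.2 else .inr (v, true)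

/-- Unit propagation derives the empty clause. -/
inductive UPFalse : CNF → Prop
  | empty {Γ : CNF} : (∅ : Clause) ∈ Γ → UPFalse Γ
  | step {Γ : CNF} (l : Lit) : ({l} : Clause) ∈ Γ →
      UPFalse (restrictCNF (litSub l) Γ) → UPFalse Γ

/-- The unit clauses `¬l` for `l ∈ C`. -/
def negUnits (C : Clause) : CNF := C.val.map (fun l => ({negLit l} : Clause))

/-- `Γ ⊢₁ C` : unit propagation on `Γ↾¬C` produces the empty clause. -/
def UPimplies (Γ : CNF) (C : Clause) : Prop := UPFalse (Γ + negUnits C)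

/-- `Γ ⊢₁ Δ` : `Γ ⊢₁ D` for every `D ∈ Δ`. -/
def UPimpliesAll (Γ Δ : CNF) : Prop := ∀ D ∈ Δ, UPimplies Γ D

/-- Total assignments. -/
abbrev TAssign := Var → Bool

/-- A total assignment satisfies a clause. -/
def satC (α : TAssign) (C : Clause) : Prop := ∃ l ∈ C, α l.1 = l.2

instance (α : TAssign) (C : Clause) : Decidable (satC α C) := by
  unfold satC; infer_instance

/-- A total assignment satisfies a CNF. -/
def satCNF (α : TAssign) (Γ : CNF) : Prop := ∀ C ∈ Γ, satC α C

/-- `τ ∘ σ` : composition of a total assignment with a substitution. -/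
def comp (τ : TAssign) (σ : Sub) : TAssign := fun v =>
  match σ v with
  | .inl b => b
  | .inr l => if l.2 then τ l.1 else !(τ l.1)

/-- `τ` extends the assignment `¬C`. -/
def extendsNeg (τ : TAssign) (C : Clause) : Prop := ∀ l ∈ C, τ l.1 = !l.2

/-- The cost of a total assignment w.r.t. a set `B` of blocking variables:
the number of blocking variables set to true. -/
def cost (B : Finset Var) (α : TAssign) : ℕ := (B.filter (fun b => α b = true)).card

/-- The cost of a MaxSAT instance encoded with blocking variables `B`:
the minimum cost of a satisfying total assignment. -/
noncomputable def costCNF (B : Finset Var) (Γ : CNF) : ℕ :=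
  sInf {k | ∃ α : TAssign, satCNF α Γ ∧ cost B α = k}

/-- `σ` witnesses that `C` is cost-SR w.r.t. `Γ` (with blocking variables `B`):
the redundancy condition `Γ↾¬C ⊢₁ (Γ ∪ {C})↾σ` and the cost condition. -/
def CostSRwit (B : Finset Var) (Γ : CNF) (C : Clause) (σ : Sub) : Prop :=
  UPimpliesAll (restrictCNF (negSub C) Γ) (restrictCNF σ (C ::ₘ Γ)) ∧
  ∀ τ : TAssign, extendsNeg τ C → cost B (comp τ σ) ≤ cost B τ

/-- `C` is cost-SR w.r.t. `Γ`. -/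
def CostSR (B : Finset Var) (Γ : CNF) (C : Clause) : Prop := ∃ σ, CostSRwit B Γ C σ

/-- A substitution which is an assignment: every value is `0`, `1`,
or the variable itself. -/
def isAssign (σ : Sub) : Prop :=
  ∀ v, σ v = .inl true ∨ σ v = .inl false ∨ σ v = .inr (v, true)

/-- The variables of a clause. -/
def varsClause (C : Clause) : Finset Var := C.image Prod.fst

/-- The variables of a CNF. -/
def varsCNF (Γ : CNF) : Finset Var := (Γ.map varsClause).sup

/-- Membership in the domain of an assignment. -/
def subDom (σ : Sub) (v : Var) : Prop := ∃ b : Bool, σ v = .inl b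

/-- `C` is cost-PR w.r.t. `Γ`: cost-SR witnessed by an assignment. -/
def CostPR (B : Finset Var) (Γ : CNF) (C : Clause) : Prop :=
  ∃ σ, CostSRwit B Γ C σ ∧ isAssign σ

/-- `C` is cost-SPR w.r.t. `Γ`: cost-SR witnessed by an assignment with
domain `dom(¬C) = Var(C)`. -/
def CostSPR (B : Finset Var) (Γ : CNF) (C : Clause) : Prop :=
  ∃ σ, CostSRwit B Γ C σ ∧ isAssign σ ∧ (∀ v, subDom σ v ↔ v ∈ varsClause C)

/-- `C` is cost-LPR w.r.t. `Γ`: cost-SR witnessed by an assignment with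
domain `dom(¬C)` differing from `¬C` on exactly one variable. -/
def CostLPR (B : Finset Var) (Γ : CNF) (C : Clause) : Prop :=
  ∃ σ, CostSRwit B Γ C σ ∧ isAssign σ ∧ (∀ v, subDom σ v ↔ v ∈ varsClause C) ∧
    ((varsClause C).filter (fun v => σ v ≠ negSub C v)).card = 1

/-- `D` is a resolvent of `E₁` and `E₂`. -/
def resolvent (D E₁ E₂ : Clause) : Prop :=
  ∃ x : Var, (x, true) ∈ E₁ ∧ (x, false) ∈ E₂ ∧
    D = E₁.erase (x, true) ∪ E₂.erase (x, false)

/-- A derivation from `Γ` in the calculus with redundancy rule `Red`: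
every clause of the list is in `Γ`, a weakening of an earlier clause,
a resolvent of two earlier clauses, or redundant (w.r.t. `Red`) relative to
`Γ` together with the earlier clauses, using no new variables. -/
def IsDeriv (Red : Finset Var → CNF → Clause → Prop) (B : Finset Var) (Γ : CNF)
    (L : List Clause) : Prop :=
  ∀ i, ∀ hi : i < L.length,
    L[i] ∈ Γ ∨
    (∃ j, ∃ hj : j < i, L[j]'(hj.trans hi) ⊆ L[i]) ∨
    (∃ j k, ∃ hj : j < i, ∃ hk : k < i,
      resolvent L[i] (L[j]'(hj.trans hi)) (L[k]'(hk.trans hi))) ∨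
    (Red B (Γ + (↑(L.take i) : CNF)) L[i] ∧ varsClause L[i] ⊆ varsCNF Γ)

/-- `C ∨ ℓ` is a cost blocked clause (cost-BC) w.r.t. `Γ` and `ℓ`. -/
def CostBC (B : Finset Var) (Γ : CNF) (C : Clause) (l : Lit) : Prop :=
  (∀ D ∈ Γ, negLit l ∈ D → isTaut (C ∪ D.erase (negLit l))) ∧
  ¬(l.2 = true ∧ l.1 ∈ B)

/-- Hamming distance between two total assignments, over the variables in `V`. -/
def HD (V : Finset Var) (α β : TAssign) : ℕ := (V.filter (fun v => α v ≠ β v)).card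

/-- `flip(C, σ) ≥ d` : some total assignment `τ` extending `¬C` has
Hamming distance (over `V`) at least `d` from `τ ∘ σ`. -/
def flipGE (V : Finset Var) (C : Clause) (σ : Sub) (d : ℕ) : Prop :=
  ∃ τ : TAssign, extendsNeg τ C ∧ d ≤ HD V τ (comp τ σ)

@[simp]
lemma negLit_negLit (l : Lit) : negLit (negLit l) = l := by
  simp [negLit]

@[simp]
lemma negSV_negSV (s : SubVal) : negSV (negSV s) = s := by
  cases s <;> simp [negSV]

lemma appLit_negLit (σ : Sub) (l : Lit) : appLit σ (negLit l) = negSV (appLit σ l) := by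
  obtain ⟨v, _ | _⟩ := l <;> simp [appLit, negLit]

lemma appLit_litSub_self (l : Lit) : appLit (litSub l) l = .inl true := by
  obtain ⟨v, _ | _⟩ := l <;> simp [appLit, litSub, negSV]

def appSV (τ : Sub) : SubVal → SubVal
  | .inl b => .inl b
  | .inr l => appLit τ l

/-- `compSub τ σ` is the substitution `τ ∘ σ`: first `σ`, then `τ`. -/
def compSub (τ σ : Sub) : Sub := fun v => appSV τ (σ v)

lemma appSV_negSV (τ : Sub) (s : SubVal) : appSV τ (negSV s) = negSV (appSV τ s) := by
  cases s <;> simp [negSV, appSV, appLit_negLit]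

lemma appLit_compSub (τ σ : Sub) (l : Lit) :
    appLit (compSub τ σ) l = appSV τ (appLit σ l) := by
  obtain ⟨v, _ | _⟩ := l <;> simp [appLit, compSub, appSV_negSV]

lemma compSub_litSub_of_appLit_eq_true {σ : Sub} {l : Lit} (h : appLit σ l = .inl true) :
    compSub σ (litSub l) = σ := by
  have hσ : σ l.1 = .inl l.2 := by
    obtain ⟨v, _ | _⟩ := l <;> rcases hv : σ v with _ | _ <;> simp_all [appLit, negSV]
  funext v
  by_cases hv : v = l.1
  · simp [compSub, litSub, appSV, hv, hσ]
  · simp [compSub, litSub, appSV, appLit, hv]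

lemma clauseTrue_singleton {σ : Sub} {l : Lit} :
    clauseTrue σ {l} ↔ appLit σ l = .inl true := by
  simp [clauseTrue]

lemma mem_restrictClause {σ : Sub} {C : Clause} {m : Lit} :
    m ∈ restrictClause σ C ↔ ∃ l ∈ C, appLit σ l = .inr m := by
  simp only [restrictClause, Finset.mem_biUnion]
  refine exists_congr fun l => and_congr_right fun _ => ?_
  rcases appLit σ l with _ | m' <;> simp [eq_comm]

lemma restrictClause_singleton_of_appLit_eq_inl {σ : Sub} {l : Lit} {b : Bool}
    (h : appLit σ l = .inl b) : restrictClause σ {l} = ∅ := by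
  ext m
  simp [mem_restrictClause, h]

lemma restrictClause_singleton_of_appLit_eq_inr {σ : Sub} {l m : Lit}
    (h : appLit σ l = .inr m) : restrictClause σ {l} = {m} := by
  ext m'
  simp [mem_restrictClause, h, eq_comm]

lemma restrictClause_compSub (τ σ : Sub) (C : Clause) :
    restrictClause (compSub τ σ) C = restrictClause τ (restrictClause σ C) := by
  ext m
  simp only [mem_restrictClause, appLit_compSub]
  constructor
  · rintro ⟨l, hl, h⟩
    rcases hσ : appLit σ l with _ | m'
    · simp [hσ, appSV] at h
    · exact ⟨m', ⟨l, hl, hσ⟩, by rwa [hσ] at h⟩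
  · rintro ⟨m', ⟨l, hl, hσ⟩, h⟩
    exact ⟨l, hl, by rwa [hσ]⟩

lemma clauseTrue_compSub (τ σ : Sub) (C : Clause) :
    clauseTrue (compSub τ σ) C ↔ clauseTrue σ C ∨ clauseTrue τ (restrictClause σ C) := by
  simp only [clauseTrue, mem_restrictClause, appLit_compSub]
  constructor
  · rintro ⟨l, hl, h⟩
    rcases hσ : appLit σ l with b | m
    · exact .inl ⟨l, hl, by simpa [hσ, appSV] using h⟩
    · exact .inr ⟨m, ⟨l, hl, hσ⟩, by rwa [hσ] at h⟩
  · rintro (⟨l, hl, h⟩ | ⟨m, ⟨l, hl, hσ⟩, h⟩)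
    · exact ⟨l, hl, by rw [h]; rfl⟩
    · exact ⟨l, hl, by rwa [hσ]⟩

lemma restrictCNF_restrictCNF (τ σ : Sub) (Γ : CNF) :
    restrictCNF τ (restrictCNF σ Γ) = restrictCNF (compSub τ σ) Γ := by
  simp only [restrictCNF, Multiset.filter_map, Multiset.map_map, Multiset.filter_filter]
  congr 1
  · funext C
    exact (restrictClause_compSub τ σ C).symm
  · refine Multiset.filter_congr fun C _ => ?_
    simp only [Function.comp, clauseTrue_compSub]
    tauto

lemma restrictCNF_add (σ : Sub) (Γ Γ' : CNF) :
    restrictCNF σ (Γ + Γ') = restrictCNF σ Γ + restrictCNF σ Γ' := by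
  simp only [restrictCNF, Multiset.filter_add, Multiset.map_add]

lemma mem_restrictCNF {σ : Sub} {Γ : CNF} {C : Clause} :
    C ∈ restrictCNF σ Γ ↔ ∃ D ∈ Γ, ¬ clauseTrue σ D ∧ restrictClause σ D = C := by
  simp [restrictCNF, and_assoc]

lemma restrictClause_mem_restrictCNF {σ : Sub} {Γ : CNF} {C : Clause} (hC : C ∈ Γ)
    (h : ¬ clauseTrue σ C) : restrictClause σ C ∈ restrictCNF σ Γ :=
  mem_restrictCNF.2 ⟨C, hC, h, rfl⟩

lemma restrictCNF_subset_restrictCNF {σ : Sub} {Γ Γ' : CNF} (h : Γ ⊆ Γ') :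
    restrictCNF σ Γ ⊆ restrictCNF σ Γ' := fun _ hC =>
  let ⟨D, hD, hσ, hDC⟩ := mem_restrictCNF.1 hC
  mem_restrictCNF.2 ⟨D, h hD, hσ, hDC⟩

lemma UPFalse.mono {Γ Γ' : CNF} (h : UPFalse Γ) (hΓ : Γ ⊆ Γ') : UPFalse Γ' := by
  induction h generalizing Γ' with
  | empty hmem => exact .empty (hΓ hmem)
  | step l hmem _ ih => exact .step l (hΓ hmem) (ih (restrictCNF_subset_restrictCNF hΓ))

theorem UPFalse.restrict {Γ : CNF} (h : UPFalse Γ) (σ : Sub) :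
    UPFalse (restrictCNF σ Γ) := by
  induction h generalizing σ with
  | empty hmem =>
    have hempty := restrictClause_mem_restrictCNF (σ := σ) hmem (by simp [clauseTrue])
    exact .empty (by simpa [restrictClause] using hempty)
  | @step Γ l hmem _ ih =>
    have absorb : ∀ σ', appLit σ' l = .inl true → UPFalse (restrictCNF σ' Γ) := fun σ' hσ' => by
      simpa [restrictCNF_restrictCNF, compSub_litSub_of_appLit_eq_true hσ'] using ih σ'
    rcases hσ : appLit σ l with (_ | _) | m
    · have hempty := restrictClause_mem_restrictCNF hmem (clauseTrue_singleton.not.2 (by rw [hσ]; simp))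
      rw [restrictClause_singleton_of_appLit_eq_inl hσ] at hempty
      exact .empty hempty
    · exact absorb σ hσ
    · have hm := restrictClause_mem_restrictCNF hmem (clauseTrue_singleton.not.2 (by rw [hσ]; simp))
      rw [restrictClause_singleton_of_appLit_eq_inr hσ] at hm
      refine .step m hm ?_
      rw [restrictCNF_restrictCNF]
      exact absorb _ (by rw [appLit_compSub, hσ, appSV, appLit_litSub_self])

lemma restrictCNF_negUnits_subset {σ : Sub} {D : Clause} (hD : ¬ clauseTrue σ D) :
    restrictCNF σ (negUnits D) ⊆ negUnits (restrictClause σ D) := by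
  intro C hC
  obtain ⟨_, hU, hU_true, rfl⟩ := mem_restrictCNF.1 hC
  obtain ⟨l, hl, rfl⟩ := Multiset.mem_map.1 hU
  rw [clauseTrue_singleton, appLit_negLit] at hU_true
  rcases hσ : appLit σ l with (_ | _) | m
  · simp [hσ, negSV] at hU_true
  · exact absurd ⟨l, hl, hσ⟩ hD
  · have hneg : appLit σ (negLit l) = .inr (negLit m) := by rw [appLit_negLit, hσ, negSV]
    rw [restrictClause_singleton_of_appLit_eq_inr hneg]
    exact Multiset.mem_map_of_mem _ (mem_restrictClause.2 ⟨l, hl, hσ⟩)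

/-- If `Γ ⊢₁ Δ`, then `Γ↾σ ⊢₁ Δ↾σ`. -/
theorem restriction_preserves_unit_implication (σ : Sub) (Γ Δ : CNF)
    (h : UPimpliesAll Γ Δ) :
    UPimpliesAll (restrictCNF σ Γ) (restrictCNF σ Δ) := by
  intro D hD
  obtain ⟨D₀, hD₀, hσD₀, rfl⟩ := mem_restrictCNF.1 hD
  have hrefute : UPFalse (restrictCNF σ (Γ + negUnits D₀)) := UPFalse.restrict (h D₀ hD₀) σ
  rw [restrictCNF_add] at hrefute
  exact hrefute.mono fun C hC =>
    Multiset.mem_add.2 ((Multiset.mem_add.1 hC).imp id (restrictCNF_negUnits_subset hσD₀ ·))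

end PaperMaxSAT
end

section
/- If C ∨ ℓ is cost-BC with respect to a CNF Γ and the literal ℓ, then cost(Γ) = cost(Γ ∪ {C ∨ ℓ}). -/
namespace PaperMaxSAT

/-! A model `α` of `Γ` that falsifies `C ∨ ℓ` is repaired by flipping `ℓ` to true. A clause
`D ∨ ¬ℓ` of `Γ` that loses its satisfied literal `¬ℓ` stays satisfied: the tautology `C ∨ D`
is satisfied by `α`, and not through `C`, which `α` falsifies, so through a literal of `D`
on another variable than `ℓ`'s. Since `ℓ` is not a positive blocking literal, the flip does
not increase the cost. -/

lemma sat_negLit_iff {α : TAssign} {m : Lit} :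
    α (negLit m).1 = (negLit m).2 ↔ α m.1 ≠ m.2 := by
  obtain ⟨v, b⟩ := m
  cases b <;> simp [negLit]

lemma eq_negLit_of_sat_of_not_sat {α : TAssign} {l m : Lit} (hm : α m.1 = m.2)
    (hl : α l.1 ≠ l.2) (hvar : m.1 = l.1) : m = negLit l := by
  obtain ⟨v, b⟩ := m
  obtain ⟨w, c⟩ := l
  simp only at hm hl hvar
  subst hvar hm
  cases c <;> simp_all [negLit]

lemma satC_of_isTaut {α : TAssign} {E : Clause} (hE : isTaut E) : satC α E := by
  obtain ⟨t, ht, hnt⟩ := hE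
  by_cases htα : α t.1 = t.2
  · exact ⟨t, ht, htα⟩
  · exact ⟨negLit t, hnt, sat_negLit_iff.2 htα⟩

lemma satCNF_cons_iff {α : TAssign} {E : Clause} {Γ : CNF} :
    satCNF α (E ::ₘ Γ) ↔ satC α E ∧ satCNF α Γ :=
  Multiset.forall_mem_cons

lemma satC_update_of_ne {α : TAssign} {D : Clause} {m : Lit} (hm : m ∈ D)
    (hmα : α m.1 = m.2) {v : Var} (hv : m.1 ≠ v) (b : Bool) :
    satC (Function.update α v b) D :=
  ⟨m, hm, by rwa [Function.update_of_ne hv]⟩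

lemma cost_update_le (B : Finset Var) (α : TAssign) {v : Var} {b : Bool}
    (h : ¬(b = true ∧ v ∈ B)) : cost B (Function.update α v b) ≤ cost B α := by
  refine Finset.card_le_card fun x hx => ?_
  rw [Finset.mem_filter] at hx ⊢
  refine ⟨hx.1, ?_⟩
  by_cases hxv : x = v
  · subst hxv
    exact absurd ⟨by simpa using hx.2, hx.1⟩ h
  · simpa [Function.update_of_ne hxv] using hx.2

lemma satC_update_of_blocked {α : TAssign} {C D : Clause} {l : Lit}
    (hblock : negLit l ∈ D → isTaut (C ∪ D.erase (negLit l))) (hD : satC α D)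
    (hC : ∀ m ∈ C, α m.1 ≠ m.2) (hl : α l.1 ≠ l.2) :
    satC (Function.update α l.1 l.2) D := by
  obtain ⟨m, hm, hmα⟩ := hD
  by_cases hvar : m.1 = l.1
  · have hml := eq_negLit_of_sat_of_not_sat hmα hl hvar
    obtain ⟨s, hs, hsα⟩ := satC_of_isTaut (α := α) (hblock (hml ▸ hm))
    rcases Finset.mem_union.1 hs with hsC | hsD
    · exact absurd hsα (hC s hsC)
    · have hsvar : s.1 ≠ l.1 := fun h =>
        Finset.ne_of_mem_erase hsD (eq_negLit_of_sat_of_not_sat hsα hl h)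
      exact satC_update_of_ne (Finset.mem_of_mem_erase hsD) hsα hsvar _
  · exact satC_update_of_ne hm hmα hvar _

lemma exists_satCNF_cons_cost_le_of_costBC {B : Finset Var} {Γ : CNF} {C : Clause} {l : Lit}
    (h : CostBC B Γ C l) {α : TAssign} (hα : satCNF α Γ) :
    ∃ β, satCNF β (insert l C ::ₘ Γ) ∧ cost B β ≤ cost B α := by
  by_cases hs : satC α (insert l C)
  · exact ⟨α, satCNF_cons_iff.2 ⟨hs, hα⟩, le_rfl⟩
  have hfalse : ∀ m ∈ insert l C, α m.1 ≠ m.2 := fun m hm hmα => hs ⟨m, hm, hmα⟩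
  refine ⟨Function.update α l.1 l.2, satCNF_cons_iff.2 ⟨?_, fun D hD => ?_⟩,
    cost_update_le B α h.2⟩
  · exact ⟨l, Finset.mem_insert_self l C, Function.update_self _ _ _⟩
  · exact satC_update_of_blocked (h.1 D hD) (hα D hD)
      (fun m hm => hfalse m (Finset.mem_insert_of_mem hm)) (hfalse l (Finset.mem_insert_self l C))

lemma costCNF_eq_of_forall_exists_cost_le {B : Finset Var} {Γ Δ : CNF}
    (hΓ : ∀ α, satCNF α Γ → ∃ β, satCNF β Δ ∧ cost B β ≤ cost B α)
    (hΔ : ∀ β, satCNF β Δ → ∃ α, satCNF α Γ ∧ cost B α ≤ cost B β) :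
    costCNF B Γ = costCNF B Δ := by
  refine csInf_eq_csInf_of_forall_exists_le ?_ ?_
  · rintro _ ⟨α, hα, rfl⟩
    obtain ⟨β, hβ, hle⟩ := hΓ α hα
    exact ⟨_, ⟨β, hβ, rfl⟩, hle⟩
  · rintro _ ⟨β, hβ, rfl⟩
    obtain ⟨α, hα, hle⟩ := hΔ β hβ
    exact ⟨_, ⟨α, hα, rfl⟩, hle⟩

/-- if `C ∨ ℓ` is cost-BC w.r.t. `Γ` and `ℓ`, then
`cost(Γ) = cost(Γ ∪ {C ∨ ℓ})`. -/
theorem costBC_preserves_cost (B : Finset Var) (Γ : CNF) (C : Clause) (l : Lit)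
    (h : CostBC B Γ C l) :
    costCNF B Γ = costCNF B (insert l C ::ₘ Γ) :=
  costCNF_eq_of_forall_exists_cost_le (fun _ hα => exists_satCNF_cons_cost_le_of_costBC h hα)
    fun β hβ => ⟨β, (satCNF_cons_iff.1 hβ).2, le_rfl⟩

end PaperMaxSAT
end

section
/- Soundness of cost-SR: let Γ be a satisfiable MaxSAT instance encoded with blocking variables. If some cost-SR derivation from Γ contains unit clauses b_{i₁},…,b_{i_k} for k distinct blocking variables, then cost(Γ) ≥ k; if moreover the derivation also contains the unit clause ¬b_j for every blocking variable index j ∉ {i₁,…,i_k}, then cost(Γ) = k. -/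
namespace PaperMaxSAT

/-- Truth of a substitution value under a total assignment. -/
def svTrue (τ : TAssign) : SubVal → Prop
  | .inl b => b = true
  | .inr m => τ m.1 = m.2

lemma evalKey (τ : TAssign) (σ : Sub) (l : Lit) :
    (comp τ σ l.1 = l.2) ↔ svTrue τ (appLit σ l) := by
  obtain ⟨v, p⟩ := l
  simp only [comp, appLit]
  cases h : σ v with
  | inl b => cases b <;> cases p <;> simp [svTrue, negSV, h]
  | inr m =>
    obtain ⟨w, q⟩ := m
    cases q <;> cases p <;> simp [svTrue, negSV, negLit, h]

lemma satC_comp (τ : TAssign) (σ : Sub) (C : Clause) :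
    satC (comp τ σ) C ↔ clauseTrue σ C ∨ satC τ (restrictClause σ C) := by
  constructor
  · rintro ⟨l, hl, hv⟩
    have hs := (evalKey τ σ l).mp hv
    cases h : appLit σ l with
    | inl b =>
      rw [h] at hs
      left; exact ⟨l, hl, by rw [h]; simp [svTrue] at hs; rw [hs]⟩
    | inr m =>
      rw [h] at hs
      right; exact ⟨m, mem_restrictClause.mpr ⟨l, hl, h⟩, hs⟩
  · rintro (⟨l, hl, h⟩ | ⟨m, hm, hv⟩)
    · exact ⟨l, hl, (evalKey τ σ l).mpr (by rw [h]; trivial)⟩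
    · obtain ⟨l, hl, h⟩ := mem_restrictClause.mp hm
      exact ⟨l, hl, (evalKey τ σ l).mpr (by rw [h]; exact hv)⟩

lemma satCNF_comp (τ : TAssign) (σ : Sub) (Γ : CNF) :
    satCNF (comp τ σ) Γ ↔ satCNF τ (restrictCNF σ Γ) := by
  constructor
  · intro h D hD
    simp only [restrictCNF, Multiset.mem_map, Multiset.mem_filter] at hD
    obtain ⟨C, ⟨hCΓ, hCt⟩, rfl⟩ := hD
    rcases (satC_comp τ σ C).mp (h C hCΓ) with ht | hs
    · exact absurd ht hCt
    · exact hs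
  · intro h C hC
    by_cases ht : clauseTrue σ C
    · exact (satC_comp τ σ C).mpr (Or.inl ht)
    · refine (satC_comp τ σ C).mpr (Or.inr (h _ ?_))
      simp only [restrictCNF, Multiset.mem_map, Multiset.mem_filter]
      exact ⟨C, ⟨hC, ht⟩, rfl⟩

lemma comp_litSub (α : TAssign) (l : Lit) (h : α l.1 = l.2) :
    comp α (litSub l) = α := by
  funext v
  simp only [comp, litSub]
  by_cases hv : v = l.1
  · subst hv; simp [← h]
  · simp [hv]

lemma comp_negSub (α : TAssign) (C : Clause) (h : extendsNeg α C) :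
    comp α (negSub C) = α := by
  funext v
  simp only [comp, negSub]
  by_cases h1 : (v, true) ∈ C
  · have := h _ h1; simp at this; simp [h1, this]
  · by_cases h2 : (v, false) ∈ C
    · have := h _ h2; simp at this; simp [h1, h2, this]
    · simp [h1, h2]

lemma upfalse_unsat {Γ : CNF} (h : UPFalse Γ) : ∀ α, ¬ satCNF α Γ := by
  induction h with
  | empty hmem =>
    intro α hα
    obtain ⟨l, hl, _⟩ := hα _ hmem
    exact absurd hl (Finset.notMem_empty l)
  | step l hmem _ ih =>
    intro α hα
    obtain ⟨m, hm, hv⟩ := hα _ hmem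
    rw [Finset.mem_singleton] at hm; subst hm
    exact ih α (by rw [← satCNF_comp, comp_litSub α _ hv]; exact hα)

lemma satCNF_add {α : TAssign} {Γ Δ : CNF} :
    satCNF α (Γ + Δ) ↔ satCNF α Γ ∧ satCNF α Δ := by
  constructor
  · intro h
    exact ⟨fun C hC => h C (Multiset.mem_add.mpr (Or.inl hC)),
      fun C hC => h C (Multiset.mem_add.mpr (Or.inr hC))⟩
  · rintro ⟨h1, h2⟩ C hC
    rcases Multiset.mem_add.mp hC with h | h
    exacts [h1 C h, h2 C h]

lemma UPimplies_sound {Γ : CNF} {D : Clause} (h : UPimplies Γ D)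
    {α : TAssign} (hα : satCNF α Γ) : satC α D := by
  by_contra hD
  refine upfalse_unsat h α (satCNF_add.mpr ⟨hα, ?_⟩)
  intro E hE
  simp only [negUnits, Multiset.mem_map] at hE
  obtain ⟨l, hl, rfl⟩ := hE
  refine ⟨negLit l, Finset.mem_singleton_self _, ?_⟩
  simp only [negLit]
  have hne : α l.1 ≠ l.2 := fun hc => hD ⟨l, hl, hc⟩
  cases hb : α l.1 <;> cases hp : l.2 <;> simp_all

lemma extendsNeg_of_not_satC {α : TAssign} {C : Clause} (h : ¬ satC α C) :
    extendsNeg α C := by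
  intro l hl
  have hne : α l.1 ≠ l.2 := fun hc => h ⟨l, hl, hc⟩
  cases hb : α l.1 <;> cases hp : l.2 <;> simp_all

lemma satC_resolvent {α : TAssign} {D E₁ E₂ : Clause} (h : resolvent D E₁ E₂)
    (h1 : satC α E₁) (h2 : satC α E₂) : satC α D := by
  obtain ⟨x, hx1, hx2, rfl⟩ := h
  cases hb : α x with
  | false =>
    obtain ⟨l, hl, hv⟩ := h1
    refine ⟨l, Finset.mem_union_left _ (Finset.mem_erase.mpr ⟨?_, hl⟩), hv⟩
    rintro rfl; simp_all
  | true =>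
    obtain ⟨l, hl, hv⟩ := h2
    refine ⟨l, Finset.mem_union_right _ (Finset.mem_erase.mpr ⟨?_, hl⟩), hv⟩
    rintro rfl; simp_all

lemma satC_mono {α : TAssign} {C D : Clause} (h : C ⊆ D) (hs : satC α C) :
    satC α D := by
  obtain ⟨l, hl, hv⟩ := hs
  exact ⟨l, h hl, hv⟩

lemma deriv_sound_aux (B : Finset Var) (Γ : CNF) (L : List Clause)
    (hL : IsDeriv CostSR B Γ L) (α : TAssign) (hα : satCNF α Γ) :
    ∀ i, i ≤ L.length →
      ∃ β, satCNF β (Γ + ↑(L.take i)) ∧ cost B β ≤ cost B α := by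
  intro i
  induction i with
  | zero => intro _; exact ⟨α, by simpa using hα, le_refl _⟩
  | succ i ih =>
    intro hi
    have hi' : i < L.length := hi
    obtain ⟨β, hβ, hcost⟩ := ih (le_of_lt hi')
    have htake : (↑(L.take (i+1)) : CNF) = ↑(L.take i) + {L[i]} := by
      rw [List.take_succ, List.getElem?_eq_getElem hi', Option.toList_some,
        ← Multiset.coe_add]
      rfl
    have hβL : ∀ j (hj : j < i), satC β (L[j]'(lt_trans hj hi')) := by
      intro j hj
      refine (satCNF_add.mp hβ).2 _ ?_
      rw [Multiset.mem_coe]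
      have hlen : j < (L.take i).length := by simp; omega
      rw [← List.getElem_take (xs := L) (j := i) (i := j) (h := hlen)]
      exact List.getElem_mem hlen
    suffices hs : ∃ β', satCNF β' ((Γ + ↑(L.take i)) + {L[i]}) ∧ cost B β' ≤ cost B β by
      obtain ⟨β', hb1, hb2⟩ := hs
      refine ⟨β', ?_, hb2.trans hcost⟩
      rw [htake, ← add_assoc]; exact hb1
    have hsing : ∀ {γ : TAssign}, satC γ L[i] → satCNF γ ({L[i]} : CNF) := by
      intro γ hγ C hC
      rw [Multiset.mem_singleton] at hC; subst hC; exact hγ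
    rcases hL i hi' with hmem | ⟨j, hj, hsub⟩ | ⟨j, kk, hj, hk, hres⟩ | ⟨hsr, _⟩
    · exact ⟨β, satCNF_add.mpr ⟨hβ, hsing ((satCNF_add.mp hβ).1 _ hmem)⟩, le_refl _⟩
    · exact ⟨β, satCNF_add.mpr ⟨hβ, hsing (satC_mono hsub (hβL j hj))⟩, le_refl _⟩
    · exact ⟨β, satCNF_add.mpr ⟨hβ, hsing (satC_resolvent hres (hβL j hj) (hβL kk hk))⟩,
        le_refl _⟩
    · by_cases hC : satC β L[i]
      · exact ⟨β, satCNF_add.mpr ⟨hβ, hsing hC⟩, le_refl _⟩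
      · obtain ⟨σ, hred, hcc⟩ := hsr
        have hext : extendsNeg β L[i] := extendsNeg_of_not_satC hC
        refine ⟨comp β σ, ?_, hcc β hext⟩
        have hβr : satCNF β (restrictCNF (negSub L[i]) (Γ + ↑(L.take i))) := by
          rw [← satCNF_comp, comp_negSub β _ hext]; exact hβ
        have hall : satCNF β (restrictCNF σ (L[i] ::ₘ (Γ + ↑(L.take i)))) := by
          intro D hD
          exact UPimplies_sound (hred D hD) hβr
        have := (satCNF_comp β σ _).mpr hall
        rw [← Multiset.singleton_add, add_comm] at this
        exact this

lemma deriv_sound (B : Finset Var) (Γ : CNF) (L : List Clause)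
    (hL : IsDeriv CostSR B Γ L) (α : TAssign) (hα : satCNF α Γ) :
    ∃ β, satCNF β Γ ∧ (∀ C ∈ L, satC β C) ∧ cost B β ≤ cost B α := by
  obtain ⟨β, hβ, hcost⟩ := deriv_sound_aux B Γ L hL α hα L.length le_rfl
  rw [List.take_length] at hβ
  rcases satCNF_add.mp hβ with ⟨h1, h2⟩
  exact ⟨β, h1, fun C hC => h2 C (Multiset.mem_coe.mpr hC), hcost⟩

/-- soundness of cost-SR: if a cost-SR derivation from a
satisfiable `Γ` contains unit clauses for `k` distinct blocking variables
(the set `I`), then `cost(Γ) ≥ k`; if moreover it contains `¬b_j` for every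
other blocking variable `b_j`, then `cost(Γ) = k`. -/
theorem costSR_soundness (B : Finset Var) (Γ : CNF)
    (hsat : ∃ α : TAssign, satCNF α Γ)
    (L : List Clause) (hL : IsDeriv CostSR B Γ L)
    (I : Finset Var) (hIB : I ⊆ B) (k : ℕ) (hk : I.card = k)
    (hunits : ∀ b ∈ I, ({(b, true)} : Clause) ∈ L) :
    k ≤ costCNF B Γ ∧
    ((∀ j ∈ B, j ∉ I → ({(j, false)} : Clause) ∈ L) → costCNF B Γ = k) := by
  have hSne : {n | ∃ α : TAssign, satCNF α Γ ∧ cost B α = n}.Nonempty := by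
    obtain ⟨α, hα⟩ := hsat; exact ⟨cost B α, α, hα, rfl⟩
  have hge : ∀ n ∈ {n | ∃ α : TAssign, satCNF α Γ ∧ cost B α = n}, k ≤ n := by
    rintro n ⟨α, hα, rfl⟩
    obtain ⟨β, hβ, hLsat, hcost⟩ := deriv_sound B Γ L hL α hα
    have hItrue : ∀ b ∈ I, β b = true := by
      intro b hb
      obtain ⟨l, hl, hv⟩ := hLsat _ (hunits b hb)
      rw [Finset.mem_singleton] at hl; subst hl; exact hv
    have hsub : I ⊆ B.filter (fun b => β b = true) := fun b hb =>
      Finset.mem_filter.mpr ⟨hIB hb, hItrue b hb⟩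
    calc k = I.card := hk.symm
      _ ≤ cost B β := Finset.card_le_card hsub
      _ ≤ cost B α := hcost
  have h1 : k ≤ costCNF B Γ := le_csInf hSne hge
  refine ⟨h1, fun hneg => ?_⟩
  obtain ⟨α, hα⟩ := hsat
  obtain ⟨β, hβ, hLsat, _⟩ := deriv_sound B Γ L hL α hα
  have hfilter : B.filter (fun b => β b = true) = I := by
    apply Finset.Subset.antisymm
    · intro b hb
      rw [Finset.mem_filter] at hb
      by_contra hbI
      obtain ⟨l, hl, hv⟩ := hLsat _ (hneg b hb.1 hbI)
      rw [Finset.mem_singleton] at hl; subst hl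
      simp [hb.2] at hv
    · intro b hb
      have hbt : β b = true := by
        obtain ⟨l, hl, hv⟩ := hLsat _ (hunits b hb)
        rw [Finset.mem_singleton] at hl; subst hl; exact hv
      exact Finset.mem_filter.mpr ⟨hIB hb, hbt⟩
  have hmem : k ∈ {n | ∃ α : TAssign, satCNF α Γ ∧ cost B α = n} :=
    ⟨β, hβ, by rw [cost, hfilter, hk]⟩
  exact le_antisymm (csInf_le (OrderBot.bddBelow _) hmem) h1

end PaperMaxSAT
end

section
/- For all m > n ≥ 1, the minimum cost of the blocking-variable weak pigeonhole principle is cost(BPHP(m,n)) = m − n. -/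
namespace PaperMaxSAT

/-- The variable `p_{i,j}` ("pigeon `i` flies to hole `j`"). -/
def pV (i j : ℕ) : Var := 3 * Nat.pair i j
/-- The blocking variable `b_i` of the totality clause for pigeon `i`. -/
def bTot (i : ℕ) : Var := 3 * i + 1
/-- The blocking variable `b_{i,k,j}` of the injectivity clause for
pigeons `i < k` and hole `j`. -/
def bInj (i k j : ℕ) : Var := 3 * Nat.pair i (Nat.pair k j) + 2

/-- The totality clause `⋁_{j∈[n]} p_{i,j} ∨ b_i`. -/
def totClause (n i : ℕ) : Clause :=
  insert (bTot i, true) ((Finset.range n).image fun j => ((pV i (j+1), true) : Lit))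

/-- The triples `(i-1, k-1, j-1)` with `1 ≤ i < k ≤ m` and `j ∈ [n]`. -/
def injTriples (m n : ℕ) : Finset (ℕ × ℕ × ℕ) :=
  (Finset.range m ×ˢ Finset.range m ×ˢ Finset.range n).filter fun t => t.1 < t.2.1

/-- The injectivity clause `¬p_{i,j} ∨ ¬p_{k,j} ∨ b_{i,k,j}` for the triple
`t = (i-1, k-1, j-1)`. -/
def injClause (t : ℕ × ℕ × ℕ) : Clause :=
  { ((pV (t.1+1) (t.2.2+1), false) : Lit),
    ((pV (t.2.1+1) (t.2.2+1), false) : Lit),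
    ((bInj (t.1+1) (t.2.1+1) (t.2.2+1), true) : Lit) }

/-- The blocking-variable weak pigeonhole principle `BPHP(m,n)`. -/
def BPHP (m n : ℕ) : CNF :=
  ((Finset.range m).val.map fun i => totClause n (i+1)) +
  ((injTriples m n).val.map injClause)

/-- The blocking variables of `BPHP(m,n)`. -/
def BPHPblocking (m n : ℕ) : Finset Var :=
  ((Finset.range m).image fun i => bTot (i+1)) ∪
  ((injTriples m n).image fun t => bInj (t.1+1) (t.2.1+1) (t.2.2+1))


/-- The canonical minimum-cost assignment for `BPHP`: pigeon `i ≤ n` flies to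
hole `i`; pigeons `i > n` are blocked. -/
def wA (n : ℕ) : TAssign := fun v =>
  if v % 3 = 0 then
    decide ((Nat.unpair (v/3)).1 = (Nat.unpair (v/3)).2 ∧
      1 ≤ (Nat.unpair (v/3)).1 ∧ (Nat.unpair (v/3)).1 ≤ n)
  else if v % 3 = 1 then decide (n < v / 3)
  else false

lemma wA_pV (n i j : ℕ) : wA n (pV i j) = decide (i = j ∧ 1 ≤ i ∧ i ≤ n) := by
  have h0 : (3 * Nat.pair i j) % 3 = 0 := by omega
  have h1 : (3 * Nat.pair i j) / 3 = Nat.pair i j := by omega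
  simp [wA, pV, h0, h1]

lemma wA_bTot (n i : ℕ) : wA n (bTot i) = decide (n < i) := by
  have h0 : (3 * i + 1) % 3 = 1 := by omega
  have h1 : (3 * i + 1) / 3 = i := by omega
  simp [wA, bTot, h0, h1]

lemma wA_bInj (n i k j : ℕ) : wA n (bInj i k j) = false := by
  have h0 : (3 * Nat.pair i (Nat.pair k j) + 2) % 3 = 2 := by omega
  simp [wA, bInj, h0]

lemma bTot_inj : Function.Injective (fun i => bTot (i+1)) := by
  intro a b h
  have h' : (3*(a+1)+1 : ℕ) = 3*(b+1)+1 := h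
  omega

lemma bInj_inj :
    Function.Injective (fun t : ℕ × ℕ × ℕ => bInj (t.1+1) (t.2.1+1) (t.2.2+1)) := by
  rintro ⟨a, b, c⟩ ⟨a', b', c'⟩ h
  have h' : (3 * Nat.pair (a+1) (Nat.pair (b+1) (c+1)) + 2 : ℕ) =
      3 * Nat.pair (a'+1) (Nat.pair (b'+1) (c'+1)) + 2 := h
  have h2 : Nat.pair (a+1) (Nat.pair (b+1) (c+1)) =
      Nat.pair (a'+1) (Nat.pair (b'+1) (c'+1)) := by omega
  rw [Nat.pair_eq_pair, Nat.pair_eq_pair] at h2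
  obtain ⟨h3, h4, h5⟩ := h2
  simp only [Prod.mk.injEq]
  omega

lemma satC_tot {α : TAssign} {n i : ℕ} :
    satC α (totClause n i) ↔
      α (bTot i) = true ∨ ∃ j < n, α (pV i (j+1)) = true := by
  unfold satC totClause
  constructor
  · rintro ⟨l, hl, hv⟩
    rcases Finset.mem_insert.1 hl with h | h
    · subst h; exact Or.inl hv
    · obtain ⟨j, hj, rfl⟩ := Finset.mem_image.1 h
      exact Or.inr ⟨j, Finset.mem_range.1 hj, hv⟩
  · rintro (h | ⟨j, hj, h⟩)
    · exact ⟨(bTot i, true), Finset.mem_insert_self _ _, h⟩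
    · exact ⟨(pV i (j+1), true),
        Finset.mem_insert_of_mem (Finset.mem_image.2 ⟨j, Finset.mem_range.2 hj, rfl⟩), h⟩

lemma satC_inj {α : TAssign} {t : ℕ × ℕ × ℕ} :
    satC α (injClause t) ↔
      α (pV (t.1+1) (t.2.2+1)) = false ∨ α (pV (t.2.1+1) (t.2.2+1)) = false ∨
      α (bInj (t.1+1) (t.2.1+1) (t.2.2+1)) = true := by
  unfold satC injClause
  constructor
  · rintro ⟨l, hl, hv⟩
    simp only [Finset.mem_insert, Finset.mem_singleton] at hl
    rcases hl with rfl | rfl | rfl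
    · exact Or.inl hv
    · exact Or.inr (Or.inl hv)
    · exact Or.inr (Or.inr hv)
  · rintro (h | h | h)
    · exact ⟨(pV (t.1+1) (t.2.2+1), false), by simp, h⟩
    · exact ⟨(pV (t.2.1+1) (t.2.2+1), false), by simp, h⟩
    · exact ⟨(bInj (t.1+1) (t.2.1+1) (t.2.2+1), true), by simp, h⟩

lemma mem_injTriples {m n : ℕ} {t : ℕ × ℕ × ℕ} :
    t ∈ injTriples m n ↔ t.1 < m ∧ t.2.1 < m ∧ t.2.2 < n ∧ t.1 < t.2.1 := by
  simp only [injTriples, Finset.mem_filter, Finset.mem_product, Finset.mem_range]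
  tauto

lemma totClause_mem_BPHP {m n i : ℕ} (hi : i < m) : totClause n (i+1) ∈ BPHP m n :=
  Multiset.mem_add.2 (Or.inl (Multiset.mem_map.2
    ⟨i, Finset.mem_def.1 (Finset.mem_range.2 hi), rfl⟩))

lemma injClause_mem_BPHP {m n : ℕ} {t : ℕ × ℕ × ℕ} (ht : t ∈ injTriples m n) :
    injClause t ∈ BPHP m n :=
  Multiset.mem_add.2 (Or.inr (Multiset.mem_map.2 ⟨t, Finset.mem_def.1 ht, rfl⟩))

lemma wA_sat (m n : ℕ) : satCNF (wA n) (BPHP m n) := by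
  intro C hC
  rcases Multiset.mem_add.1 hC with h | h
  · obtain ⟨i, hi, rfl⟩ := Multiset.mem_map.1 h
    rw [satC_tot]
    by_cases hle : i + 1 ≤ n
    · refine Or.inr ⟨i, by omega, ?_⟩
      rw [wA_pV]
      simp only [decide_eq_true_eq]
      exact ⟨trivial, by omega, hle⟩
    · left
      rw [wA_bTot]
      simp only [decide_eq_true_eq]
      omega
  · obtain ⟨t, ht, rfl⟩ := Multiset.mem_map.1 h
    have ht' := mem_injTriples.1 (Finset.mem_def.2 ht)
    rw [satC_inj]
    by_cases h1 : wA n (pV (t.1+1) (t.2.2+1)) = false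
    · exact Or.inl h1
    · refine Or.inr (Or.inl ?_)
      rw [wA_pV] at h1 ⊢
      simp only [decide_eq_false_iff_not, decide_eq_true_eq] at h1 ⊢
      push_neg at h1
      omega

lemma wA_cost (m n : ℕ) : cost (BPHPblocking m n) (wA n) = m - n := by
  unfold cost BPHPblocking
  rw [Finset.filter_union]
  have hI : ((injTriples m n).image
      (fun t => bInj (t.1+1) (t.2.1+1) (t.2.2+1))).filter
        (fun b => wA n b = true) = ∅ := by
    rw [Finset.filter_eq_empty_iff]
    intro x hx
    obtain ⟨t, _, rfl⟩ := Finset.mem_image.1 hx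
    simp [wA_bInj]
  rw [hI, Finset.union_empty, Finset.filter_image,
    Finset.card_image_of_injective _ bTot_inj]
  have he : (Finset.range m).filter (fun i => wA n (bTot (i+1)) = true) =
      Finset.Ico n m := by
    ext x
    simp only [Finset.mem_filter, Finset.mem_range, Finset.mem_Ico, wA_bTot,
      decide_eq_true_eq]
    omega
  rw [he, Nat.card_Ico]

lemma cost_lower (m n : ℕ) (α : TAssign) (hsat : satCNF α (BPHP m n)) :
    m - n ≤ cost (BPHPblocking m n) α := by
  classical
  set T := (Finset.range m).filter (fun i => α (bTot (i+1)) = true) with hT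
  set S := (Finset.range m).filter (fun i => ¬ α (bTot (i+1)) = true) with hS
  have hTS : T.card + S.card = m := by
    rw [hT, hS, Finset.card_filter_add_card_filter_not, Finset.card_range]
  -- choose a hole for each unblocked pigeon
  have htot : ∀ i : ℕ, ∃ j : ℕ, i ∈ S → j < n ∧ α (pV (i+1) (j+1)) = true := by
    intro i
    by_cases hi : i ∈ S
    · have hi' := Finset.mem_filter.1 hi
      have him : i < m := Finset.mem_range.1 hi'.1
      have := hsat _ (totClause_mem_BPHP him)
      rcases satC_tot.1 this with hb | ⟨j, hj, hp⟩
      · exact absurd hb hi'.2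
      · exact ⟨j, fun _ => ⟨hj, hp⟩⟩
    · exact ⟨0, fun h => absurd h hi⟩
  choose h hh using htot
  -- choose a minimal representative of each fiber of h
  have hrep : ∀ i : ℕ, ∃ r : ℕ, i ∈ S →
      r ∈ S ∧ h r = h i ∧ ∀ k ∈ S, h k = h i → r ≤ k := by
    intro i
    by_cases hi : i ∈ S
    · obtain ⟨r, hrmem, hmin⟩ := Finset.exists_min_image
        (S.filter (fun k => h k = h i)) id ⟨i, Finset.mem_filter.2 ⟨hi, rfl⟩⟩
      obtain ⟨hrS, hrh⟩ := Finset.mem_filter.1 hrmem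
      exact ⟨r, fun _ => ⟨hrS, hrh,
        fun k hk hkh => hmin k (Finset.mem_filter.2 ⟨hk, hkh⟩)⟩⟩
    · exact ⟨0, fun hc => absurd hc hi⟩
  choose r hr using hrep
  have hrEq : ∀ i ∈ S, ∀ i' ∈ S, h i = h i' → r i = r i' := by
    intro i hi i' hi' hhi
    obtain ⟨h1, h2, h3⟩ := hr i hi
    obtain ⟨h1', h2', h3'⟩ := hr i' hi'
    have ha := h3' (r i) h1 (by rw [h2, hhi])
    have hb := h3 (r i') h1' (by rw [h2', ← hhi])
    omega
  set R := S.filter (fun i => r i = i) with hRdef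
  have hRcard : R.card ≤ n := by
    have := Finset.card_le_card_of_injOn h
      (s := R) (t := Finset.range n)
      (fun i hi => Finset.mem_range.2 (hh i (Finset.mem_filter.1 hi).1).1)
      (by
        intro a ha b hb hab
        simp only [Finset.mem_coe, hRdef, Finset.mem_filter] at ha hb
        have := hrEq a ha.1 b hb.1 hab
        rw [ha.2, hb.2] at this
        exact this)
    simpa using this
  set Bad := (injTriples m n).filter
    (fun t => α (bInj (t.1+1) (t.2.1+1) (t.2.2+1)) = true) with hBad
  have hmemBad : ∀ i ∈ S \ R, (r i, i, h i) ∈ Bad := by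
    intro i hi
    obtain ⟨hiS, hiR⟩ := Finset.mem_sdiff.1 hi
    obtain ⟨hriS, hrih, hrimin⟩ := hr i hiS
    have hri_lt : r i < i := by
      have hle : r i ≤ i := hrimin i hiS rfl
      have hne : r i ≠ i := fun e => hiR (Finset.mem_filter.2 ⟨hiS, e⟩)
      omega
    have hiM : i < m := Finset.mem_range.1 (Finset.mem_filter.1 hiS).1
    have hriM : r i < m := Finset.mem_range.1 (Finset.mem_filter.1 hriS).1
    have hhn : h i < n := (hh i hiS).1
    have htmem : (r i, i, h i) ∈ injTriples m n :=
      mem_injTriples.2 ⟨hriM, hiM, hhn, hri_lt⟩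
    have hsC := hsat _ (injClause_mem_BPHP htmem)
    rw [satC_inj] at hsC
    have hp1 := (hh (r i) hriS).2
    rw [hrih] at hp1
    have hp2 := (hh i hiS).2
    rcases hsC with hc | hc | hc
    · simp only at hc; rw [hp1] at hc; cases hc
    · simp only at hc; rw [hp2] at hc; cases hc
    · exact Finset.mem_filter.2 ⟨htmem, hc⟩
  have hSR : (S \ R).card ≤ Bad.card := by
    apply Finset.card_le_card_of_injOn (fun i => (r i, i, h i)) hmemBad
    intro a _ b _ he
    have := congrArg (fun t : ℕ × ℕ × ℕ => t.2.1) he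
    simpa using this
  have hRS : R ⊆ S := Finset.filter_subset _ _
  have hcardS : S.card ≤ n + Bad.card := by
    have h1 := Finset.card_sdiff_of_subset hRS
    have h2 := Finset.card_le_card hRS
    omega
  -- the cost bound
  have hdisj0 : Disjoint ((Finset.range m).image fun i => bTot (i+1))
      ((injTriples m n).image fun t => bInj (t.1+1) (t.2.1+1) (t.2.2+1)) := by
    rw [Finset.disjoint_left]
    intro a ha ha'
    obtain ⟨i, _, rfl⟩ := Finset.mem_image.1 ha
    obtain ⟨t, _, he⟩ := Finset.mem_image.1 ha'
    have h' : (3*(i+1)+1 : ℕ) = 3 * Nat.pair (t.1+1) (Nat.pair (t.2.1+1) (t.2.2+1)) + 2 := he.symm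
    omega
  have hcost : T.card + Bad.card ≤ cost (BPHPblocking m n) α := by
    unfold cost BPHPblocking
    rw [Finset.filter_union,
      Finset.card_union_of_disjoint (Finset.disjoint_filter_filter hdisj0)]
    have e1 : (((Finset.range m).image fun i => bTot (i+1)).filter
        (fun b => α b = true)).card = T.card := by
      rw [Finset.filter_image, Finset.card_image_of_injective _ bTot_inj]
    have e2 : Bad.card ≤ (((injTriples m n).image
        fun t => bInj (t.1+1) (t.2.1+1) (t.2.2+1)).filter
          (fun b => α b = true)).card := by
      have hsub : Bad.image (fun t : ℕ × ℕ × ℕ => bInj (t.1+1) (t.2.1+1) (t.2.2+1)) ⊆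
          ((injTriples m n).image
            fun t => bInj (t.1+1) (t.2.1+1) (t.2.2+1)).filter (fun b => α b = true) := by
        intro x hx
        obtain ⟨t, ht, rfl⟩ := Finset.mem_image.1 hx
        obtain ⟨ht1, ht2⟩ := Finset.mem_filter.1 ht
        exact Finset.mem_filter.2 ⟨Finset.mem_image.2 ⟨t, ht1, rfl⟩, ht2⟩
      calc Bad.card
          = (Bad.image fun t : ℕ × ℕ × ℕ => bInj (t.1+1) (t.2.1+1) (t.2.2+1)).card :=
            (Finset.card_image_of_injective _ bInj_inj).symm
        _ ≤ _ := Finset.card_le_card hsub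
    omega
  omega

/-- for all `m > n ≥ 1`, `cost(BPHP(m,n)) = m − n`. -/
theorem BPHP_cost (m n : ℕ) (hn : 1 ≤ n) (hm : n < m) :
    costCNF (BPHPblocking m n) (BPHP m n) = m - n := by
  apply le_antisymm
  · exact Nat.sInf_le ⟨wA n, wA_sat m n, wA_cost m n⟩
  · refine le_csInf ⟨m - n, wA n, wA_sat m n, wA_cost m n⟩ ?_
    rintro k ⟨α, hα, rfl⟩
    exact cost_lower m n α hα

end PaperMaxSAT
end
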